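/- arXiv:math/0604610 — 6 statements merged into one kernel-verified Lean document; each statement's English description precedes it below -/
import Mathlib

section
/- Let R be a ring, S ⊆ R a multiplicative subset (1 ∈ S, closed under products), and let E(S) be the set of all e ∈ R such that for every s ∈ S there exist s' ∈ S and r' ∈ R with r's = s'e. If S ⊆ E(S), then E(S) is closed under multiplication: for all e₁, e₂ ∈ E(S), e₁e₂ ∈ E(S). -/
/-- The set `E(S)` of elements satisfying the partial left Ore condition
relative to `S`: `e ∈ E(S)` iff for every `s ∈ S` there are `s' ∈ S` and
`r' ∈ R` with `r' * s = s' * e`. -/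
def OreE {R : Type*} [Ring R] (S : Set R) : Set R :=
  {e | ∀ s ∈ S, ∃ s' ∈ S, ∃ r' : R, r' * s = s' * e}

/-- If `S` is multiplicative and `S ⊆ E(S)`, then `E(S)` is closed under
multiplication. -/
theorem oreE_mul_mem {R : Type*} [Ring R] (S : Set R)
    (hone : (1 : R) ∈ S) (hmul : ∀ s ∈ S, ∀ t ∈ S, s * t ∈ S)
    (hSE : S ⊆ OreE S) :
    ∀ e₁ ∈ OreE S, ∀ e₂ ∈ OreE S, e₁ * e₂ ∈ OreE S := by
  intro e₁ he₁ e₂ he₂ s hs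
  obtain ⟨s₂, hs₂, r₂, hr₂⟩ := he₂ s hs
  obtain ⟨s₁, hs₁, r₁, hr₁⟩ := he₁ s₂ hs₂
  exact ⟨s₁, hs₁, r₁ * r₂, by rw [mul_assoc, hr₂, ← mul_assoc, hr₁, mul_assoc]⟩
end

section
/- Let R be a ring, S ⊆ R a multiplicative subset, and E(S) = { e ∈ R : ∀ s ∈ S, ∃ s' ∈ S, ∃ r' ∈ R, r's = s'e }. If S ⊆ E(S), then E(S) is closed under addition: for all e₁, e₂ ∈ E(S), e₁ + e₂ ∈ E(S). -/
/-- If `S` is multiplicative and `S ⊆ E(S)`, then `E(S)` is closed under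
addition. -/
theorem oreE_add_mem {R : Type*} [Ring R] (S : Set R)
    (hone : (1 : R) ∈ S) (hmul : ∀ s ∈ S, ∀ t ∈ S, s * t ∈ S)
    (hSE : S ⊆ OreE S) :
    ∀ e₁ ∈ OreE S, ∀ e₂ ∈ OreE S, e₁ + e₂ ∈ OreE S := by
  intro e₁ he₁ e₂ he₂ s hs
  obtain ⟨s₁, hs₁, r₁, hr₁⟩ := he₁ s hs
  obtain ⟨s₂, hs₂, r₂, hr₂⟩ := he₂ s hs
  obtain ⟨s₃, hs₃, r₃, hr₃⟩ := hSE hs₁ s₂ hs₂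
  refine ⟨s₃ * s₁, hmul _ hs₃ _ hs₁, s₃ * r₁ + r₃ * r₂, ?_⟩
  have h1 : (s₃ * r₁) * s = (s₃ * s₁) * e₁ := by rw [mul_assoc, hr₁, mul_assoc]
  have h2 : (r₃ * r₂) * s = (s₃ * s₁) * e₂ := by
    rw [mul_assoc, hr₂, ← mul_assoc, hr₃, mul_assoc]
  rw [add_mul, h1, h2, mul_add]
end

section
/- Let R be a ring, S ⊆ R a multiplicative subset with S ⊆ E(S), where E(S) = { e ∈ R : ∀ s ∈ S, ∃ s' ∈ S, ∃ r' ∈ R, r's = s'e }. Then E(S) is a subring of R (it contains 0 and 1, and is closed under addition, negation, and multiplication). -/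
/-- If `S` is multiplicative and `S ⊆ E(S)`, then `E(S)` is a subring of `R`. -/
theorem oreE_is_subring {R : Type*} [Ring R] (S : Set R)
    (hone : (1 : R) ∈ S) (hmul : ∀ s ∈ S, ∀ t ∈ S, s * t ∈ S)
    (hSE : S ⊆ OreE S) :
    ∃ T : Subring R, (T : Set R) = OreE S := by
  refine ⟨{ carrier := OreE S
            one_mem' := ?_
            mul_mem' := ?_
            zero_mem' := ?_
            add_mem' := ?_
            neg_mem' := ?_ }, rfl⟩
  · rintro a b ha hb s hs
    obtain ⟨s₁, hs₁, r₁, h₁⟩ := hb s hs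
    obtain ⟨s₂, hs₂, r₂, h₂⟩ := ha s₁ hs₁
    exact ⟨s₂, hs₂, r₂ * r₁, by rw [mul_assoc, h₁, ← mul_assoc, h₂, mul_assoc]⟩
  · intro s hs
    exact ⟨s, hs, 1, by rw [one_mul, mul_one]⟩
  · intro a b ha hb s hs
    obtain ⟨s₁, hs₁, r₁, h₁⟩ := ha s hs
    obtain ⟨s₂, hs₂, r₂, h₂⟩ := hb s hs
    obtain ⟨s₃, hs₃, r₃, h₃⟩ := hSE hs₁ s₂ hs₂
    refine ⟨s₃ * s₁, hmul _ hs₃ _ hs₁, s₃ * r₁ + r₃ * r₂, ?_⟩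
    rw [mul_add, add_mul, mul_assoc, h₁, mul_assoc, h₂, ← mul_assoc r₃, h₃, ← mul_assoc]
  · intro s hs
    exact ⟨s, hs, 0, by rw [zero_mul, mul_zero]⟩
  · intro a ha s hs
    obtain ⟨s₁, hs₁, r₁, h₁⟩ := ha s hs
    exact ⟨s₁, hs₁, -r₁, by rw [neg_mul, h₁, mul_neg]⟩
end

section
/- Let R be a ring, S ⊆ R multiplicative with S ⊆ E(S), where E(S) = { e ∈ R : ∀ s ∈ S, ∃ s' ∈ S, ∃ r' ∈ R, r's = s'e }. If r ∈ R satisfies the E-relative partial left Ore condition, i.e., for every s ∈ S there exist s' ∈ S and r' ∈ R with r's - s'r ∈ E(S), then r ∈ E(S). -/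
/-- If `r` satisfies the `E`-relative partial left Ore condition, i.e. for every
`s ∈ S` there are `s' ∈ S`, `r' ∈ R` with `r' * s - s' * r ∈ E(S)`, then
`r ∈ E(S)`. -/
theorem mem_oreE_of_relative {R : Type*} [Ring R] (S : Set R)
    (hone : (1 : R) ∈ S) (hmul : ∀ s ∈ S, ∀ t ∈ S, s * t ∈ S)
    (hSE : S ⊆ OreE S) (r : R)
    (hr : ∀ s ∈ S, ∃ s' ∈ S, ∃ r' : R, r' * s - s' * r ∈ OreE S) :
    r ∈ OreE S := by
  intro s hs
  obtain ⟨s', hs', r', he⟩ := hr s hs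
  obtain ⟨t, ht, u, hu⟩ := he s hs
  refine ⟨t * s', hmul t ht s' hs', t * r' - u, ?_⟩
  have : u * s = t * (r' * s) - t * (s' * r) := by rw [← mul_sub, hu]
  rw [sub_mul, mul_assoc, mul_assoc]
  rw [this]; abel
end

section
/- Let R be a ring without zero divisors, π : R → R̄ a surjective ring homomorphism onto a ring R̄ without zero divisors, and S ⊆ R a left Ore set such that π(s) ≠ 0 for all s ∈ S. Then π(S) is a left Ore set in R̄. -/
/-- If `R` and `R̄` have no zero divisors, `π : R → R̄` is a surjective ring
homomorphism, and `S` is a left Ore set in `R` with `π s ≠ 0` for all `s ∈ S`,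
then `π(S)` is a left Ore set in `R̄`. -/
theorem leftOre_map_of_surjective {R R' : Type*} [Ring R] [Ring R']
    [NoZeroDivisors R] [NoZeroDivisors R']
    (π : R →+* R') (hπ : Function.Surjective π)
    (S : Submonoid R)
    (hS : ∀ s ∈ S, ∀ r : R, ∃ s' ∈ S, ∃ r' : R, s' * r = r' * s)
    (hns : ∀ s ∈ S, π s ≠ 0) :
    ∀ t ∈ S.map π.toMonoidHom, ∀ x : R',
      ∃ t' ∈ S.map π.toMonoidHom, ∃ x' : R', t' * x = x' * t := by
  rintro t ⟨s, hs, rfl⟩ x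
  obtain ⟨r, rfl⟩ := hπ x
  obtain ⟨s', hs', r', h⟩ := hS s hs r
  exact ⟨π s', ⟨s', hs', rfl⟩, π r', by
    simpa using congrArg π h⟩
end

section
/- Let R be a ring, Z ⊆ R a multiplicative set of central elements, and S ⊆ R a left Ore set. Then the image of S in the central localization R[Z⁻¹] is a left Ore set in R[Z⁻¹]. -/
/-- If `Z` is a multiplicative set of central non-zero-divisors in `R`,
`f : R → R'` realizes `R'` as the central localization `R[Z⁻¹]`, and `S` is a
left Ore set in `R`, then the image `f(S)` is a left Ore set in `R[Z⁻¹]`. -/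
theorem leftOre_central_localization {R R' : Type*} [Ring R] [Ring R']
    (Z : Submonoid R) (hZc : ∀ z ∈ Z, z ∈ Set.center R)
    (hZreg : ∀ z ∈ Z, ∀ r : R, z * r = 0 → r = 0)
    (f : R →+* R')
    (hunit : ∀ z ∈ Z, IsUnit (f z))
    (hgen : ∀ x : R', ∃ r : R, ∃ z ∈ Z, x * f z = f r)
    (hker : ∀ r : R, f r = 0 → r = 0)
    (S : Submonoid R)
    (hS : ∀ s ∈ S, ∀ r : R, ∃ s' ∈ S, ∃ r' : R, s' * r = r' * s) :
    ∀ t ∈ S.map f.toMonoidHom, ∀ x : R',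
      ∃ t' ∈ S.map f.toMonoidHom, ∃ x' : R', t' * x = x' * t := by
  rintro t ⟨s, hs, rfl⟩ x
  obtain ⟨r, z, hz, hx⟩ := hgen x
  obtain ⟨u, hu⟩ := hunit z hz
  obtain ⟨s', hs', r', hsr⟩ := hS s hs r
  refine ⟨f s', ⟨s', hs', rfl⟩, f r' * ↑u⁻¹, ?_⟩
  have hcomm : (u : R') * f s = f s * u := by
    rw [hu, ← map_mul, ← map_mul, (hZc z hz).comm s]
  have key : f s' * x * u = f r' * ↑u⁻¹ * f s * u := by
    rw [mul_assoc, hu, hx, ← map_mul, hsr, map_mul,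
      mul_assoc, mul_assoc, ← hu, ← hcomm, ← mul_assoc (↑u⁻¹ : R'), u.inv_mul, one_mul]
  have := congrArg (· * (↑u⁻¹ : R')) key
  simpa [mul_assoc] using this
end
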